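/- Exact values of the auxiliary variables at a KKT point: Let δ ∈ (0,1) and let (y,z) ∈ [0,1]^{3n−4} be a KKT point of the polynomial p constructed from the truncated-linear program. Then for every i ∈ {3,…,n}, writing S_i := Σ_{j<i} a_{ij} y_j + c_i, we have K z_i^+ = max{0, S_i − trunc(S_i)} and K z_i^− = max{0, trunc(S_i) − S_i}. -/

import Mathlib

/-!
Only the gate term `q_i` depends on `z_i^±`, and `∂q_i/∂z_i^+ = 2K (K z_i^+ - (S_i - 1))`,
`∂q_i/∂z_i^- = 2K (K z_i^- + S_i)`. Hence, coordinatewise, the KKT conditions say that `K z_i^+`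
and `K z_i^-` are the projections of `S_i - 1` and `-S_i` onto `[0, K]`. As `|S_i| ≤ K`, these
projections are `max 0 (S_i - 1) = max 0 (S_i - trunc S_i)` and
`max 0 (-S_i) = max 0 (trunc S_i - S_i)`.
-/

noncomputable section

/-- Truncation to the unit interval. -/
def trunc (z : ℝ) : ℝ := min 1 (max 0 z)

/-- The term `q_i` of the quadratic polynomial, implementing the `i`-th gate. -/
def qval (K : ℝ) (a : ℕ → ℕ → ℝ) (c : ℕ → ℝ) (i : ℕ) (y zp zm : ℕ → ℝ) : ℝ :=
  (y i + K * zp i - K * zm i - (∑ j ∈ Finset.Ico 1 i, a i j * y j) - c i) ^ 2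
    + 2 * K ^ 2 * zp i * zm i + 2 * K * zp i * (1 - y i) + 2 * K * zm i * y i

/-- The quadratic polynomial `p(y,z) = δ^{n+1} y_n + Σ_{i=3}^n δ^i q_i(y,z)`. -/
def pval (n : ℕ) (K δ : ℝ) (a : ℕ → ℕ → ℝ) (c : ℕ → ℝ) (y zp zm : ℕ → ℝ) : ℝ :=
  δ ^ (n + 1) * y n + ∑ i ∈ Finset.Icc 3 n, δ ^ i * qval K a c i y zp zm

/-- The partial derivative `∂p/∂y_k`. -/
def dpy (n : ℕ) (K δ : ℝ) (a : ℕ → ℕ → ℝ) (c : ℕ → ℝ) (k : ℕ) (y zp zm : ℕ → ℝ) : ℝ :=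
  deriv (fun t => pval n K δ a c (Function.update y k t) zp zm) (y k)

/-- The partial derivative `∂p/∂z_k⁺`. -/
def dpzp (n : ℕ) (K δ : ℝ) (a : ℕ → ℕ → ℝ) (c : ℕ → ℝ) (k : ℕ) (y zp zm : ℕ → ℝ) : ℝ :=
  deriv (fun t => pval n K δ a c y (Function.update zp k t) zm) (zp k)

/-- The partial derivative `∂p/∂z_k⁻`. -/
def dpzm (n : ℕ) (K δ : ℝ) (a : ℕ → ℕ → ℝ) (c : ℕ → ℝ) (k : ℕ) (y zp zm : ℕ → ℝ) : ℝ :=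
  deriv (fun t => pval n K δ a c y zp (Function.update zm k t)) (zm k)

/-- `(y, z⁺, z⁻) ∈ [0,1]^{3n−4}` is a KKT point of the minimization of `p` over the box. -/
def IsKKT (n : ℕ) (K δ : ℝ) (a : ℕ → ℕ → ℝ) (c : ℕ → ℝ) (y zp zm : ℕ → ℝ) : Prop :=
  (∀ i, 1 ≤ i → i ≤ n → y i ∈ Set.Icc (0 : ℝ) 1) ∧
  (∀ i, 3 ≤ i → i ≤ n → zp i ∈ Set.Icc (0 : ℝ) 1 ∧ zm i ∈ Set.Icc (0 : ℝ) 1) ∧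
  (∀ i, 1 ≤ i → i ≤ n →
    (0 < y i → dpy n K δ a c i y zp zm ≤ 0) ∧ (y i < 1 → 0 ≤ dpy n K δ a c i y zp zm)) ∧
  (∀ i, 3 ≤ i → i ≤ n →
    ((0 < zp i → dpzp n K δ a c i y zp zm ≤ 0) ∧ (zp i < 1 → 0 ≤ dpzp n K δ a c i y zp zm)) ∧
    ((0 < zm i → dpzm n K δ a c i y zp zm ≤ 0) ∧ (zm i < 1 → 0 ≤ dpzm n K δ a c i y zp zm)))

open Finset Function

lemma hasDerivAt_sq_affine_add_mul (u k v x : ℝ) :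
    HasDerivAt (fun t => (u + k * t) ^ 2 + v * t) (2 * k * (u + k * x) + v) x := by
  have h := ((((hasDerivAt_id' x).const_mul k).const_add u).pow 2).add
    ((hasDerivAt_id' x).const_mul v)
  exact h.congr_deriv (by push_cast; ring)

lemma mul_eq_max_zero_of_kkt {d K x t : ℝ} (hd : 0 < d) (hK : 0 < K) (hx : x ∈ Set.Icc 0 1)
    (ht : t ≤ K) (h_pos : 0 < x → d * (K * x - t) ≤ 0) (h_lt_one : x < 1 → 0 ≤ d * (K * x - t)) :
    K * x = max 0 t := by
  rcases hx.1.eq_or_lt with rfl | hx_pos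
  · have := nonneg_of_mul_nonneg_right (h_lt_one zero_lt_one) hd
    rw [max_eq_left (by linarith)]
    ring
  · have h_le : K * x ≤ t := by linarith [nonpos_of_mul_nonpos_right (h_pos hx_pos) hd]
    have h_eq : K * x = t := by
      rcases hx.2.eq_or_lt with rfl | hx_lt
      · linarith
      · linarith [nonneg_of_mul_nonneg_right (h_lt_one hx_lt) hd]
    rw [max_eq_right (h_eq ▸ (mul_pos hK hx_pos).le), h_eq]

lemma max_zero_sub_trunc (s : ℝ) : max 0 (s - trunc s) = max 0 (s - 1) := by
  unfold trunc
  grind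

lemma max_zero_trunc_sub (s : ℝ) : max 0 (trunc s - s) = max 0 (-s) := by
  unfold trunc
  grind

lemma abs_sum_mul_add_le {s : Finset ℕ} {a y : ℕ → ℝ} (hy : ∀ j ∈ s, |y j| ≤ 1) (b : ℝ) :
    |∑ j ∈ s, a j * y j + b| ≤ ∑ j ∈ s, |a j| + |b| := by
  have h_sum : |∑ j ∈ s, a j * y j| ≤ ∑ j ∈ s, |a j| := by
    refine (abs_sum_le_sum_abs _ _).trans (sum_le_sum fun j hj => ?_)
    rw [abs_mul]
    exact mul_le_of_le_one_right (abs_nonneg _) (hy j hj)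
  linarith [abs_add_le (∑ j ∈ s, a j * y j) b]

section PartialDerivatives

variable {n : ℕ} {K δ : ℝ} {a : ℕ → ℕ → ℝ} {c : ℕ → ℝ} {y zp zm : ℕ → ℝ} {i : ℕ}

lemma pval_eq_add_qval_sub (hi : i ∈ Icc 3 n) {zp' zm' : ℕ → ℝ}
    (hzp : ∀ k ≠ i, zp' k = zp k) (hzm : ∀ k ≠ i, zm' k = zm k) :
    pval n K δ a c y zp' zm' =
      pval n K δ a c y zp zm + δ ^ i * (qval K a c i y zp' zm' - qval K a c i y zp zm) := by
  have h_rest : ∑ k ∈ (Icc 3 n).erase i, δ ^ k * qval K a c k y zp' zm' =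
      ∑ k ∈ (Icc 3 n).erase i, δ ^ k * qval K a c k y zp zm :=
    sum_congr rfl fun k hk => by
      simp only [qval, hzp k (ne_of_mem_erase hk), hzm k (ne_of_mem_erase hk)]
  simp only [pval, ← add_sum_erase _ _ hi, h_rest]
  ring

lemma dpzp_eq (hi : i ∈ Icc 3 n) :
    dpzp n K δ a c i y zp zm =
      δ ^ i * (2 * K) * (K * zp i - ((∑ j ∈ Ico 1 i, a i j * y j) + c i - 1)) := by
  set S := (∑ j ∈ Ico 1 i, a i j * y j) + c i
  have h_fun : (fun t => pval n K δ a c y (update zp i t) zm) = fun t =>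
      pval n K δ a c y zp zm - δ ^ i * qval K a c i y zp zm + δ ^ i * 2 * K * zm i * y i +
        δ ^ i * ((y i - K * zm i - S + K * t) ^ 2 + (2 * K ^ 2 * zm i + 2 * K * (1 - y i)) * t) := by
    funext t
    rw [pval_eq_add_qval_sub hi (fun k hk => update_of_ne hk _ _) (fun _ _ => rfl)]
    simp only [qval, update_self, S]
    ring
  rw [dpzp, h_fun]
  convert ((hasDerivAt_sq_affine_add_mul _ _ _ (zp i)).const_mul (δ ^ i)).const_add _ |>.deriv
    using 1
  ring

lemma dpzm_eq (hi : i ∈ Icc 3 n) :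
    dpzm n K δ a c i y zp zm =
      δ ^ i * (2 * K) * (K * zm i + ((∑ j ∈ Ico 1 i, a i j * y j) + c i)) := by
  set S := (∑ j ∈ Ico 1 i, a i j * y j) + c i
  have h_fun : (fun t => pval n K δ a c y zp (update zm i t)) = fun t =>
      pval n K δ a c y zp zm - δ ^ i * qval K a c i y zp zm + δ ^ i * 2 * K * zp i * (1 - y i) +
        δ ^ i * ((y i + K * zp i - S + -K * t) ^ 2 + (2 * K ^ 2 * zp i + 2 * K * y i) * t) := by
    funext t
    rw [pval_eq_add_qval_sub hi (fun _ _ => rfl) (fun k hk => update_of_ne hk _ _)]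
    simp only [qval, update_self, S]
    ring
  rw [dpzm, h_fun]
  convert ((hasDerivAt_sq_affine_add_mul _ _ _ (zm i)).const_mul (δ ^ i)).const_add _ |>.deriv
    using 1
  ring

end PartialDerivatives

theorem kkt_aux_values_general (n : ℕ) (a : ℕ → ℕ → ℝ) (c : ℕ → ℝ)
    (K : ℝ) (hK1 : 1 ≤ K)
    (hK : ∀ i, 3 ≤ i → i ≤ n → (∑ j ∈ Finset.Ico 1 i, |a i j|) + |c i| ≤ K)
    (δ : ℝ) (hδ : δ ∈ Set.Ioo (0 : ℝ) 1)
    (y zp zm : ℕ → ℝ) (hkkt : IsKKT n K δ a c y zp zm) :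
    ∀ i, 3 ≤ i → i ≤ n →
      K * zp i
          = max 0 (((∑ j ∈ Finset.Ico 1 i, a i j * y j) + c i)
              - trunc ((∑ j ∈ Finset.Ico 1 i, a i j * y j) + c i)) ∧
      K * zm i
          = max 0 (trunc ((∑ j ∈ Finset.Ico 1 i, a i j * y j) + c i)
              - ((∑ j ∈ Finset.Ico 1 i, a i j * y j) + c i)) := by
  intro i hi hin
  obtain ⟨hy, hz, -, hz_kkt⟩ := hkkt
  obtain ⟨hzp, hzm⟩ := hz i hi hin
  obtain ⟨⟨hzp_pos, hzp_lt⟩, hzm_pos, hzm_lt⟩ := hz_kkt i hi hin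
  have hi_mem : i ∈ Icc 3 n := mem_Icc.2 ⟨hi, hin⟩
  rw [dpzp_eq hi_mem] at hzp_pos hzp_lt
  rw [dpzm_eq hi_mem, ← sub_neg_eq_add] at hzm_pos hzm_lt
  have hK_pos : 0 < K := by linarith
  have hd : 0 < δ ^ i * (2 * K) := mul_pos (pow_pos hδ.1 i) (by linarith)
  have hy_abs : ∀ j ∈ Ico 1 i, |y j| ≤ 1 := fun j hj => by
    obtain ⟨hj1, hji⟩ := mem_Ico.1 hj
    obtain ⟨hy0, hy1⟩ := hy j hj1 (hji.le.trans hin)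
    exact abs_le.2 ⟨by linarith, hy1⟩
  have hS : |(∑ j ∈ Ico 1 i, a i j * y j) + c i| ≤ K :=
    (abs_sum_mul_add_le hy_abs _).trans (hK i hi hin)
  have hS' := abs_le.1 hS
  rw [max_zero_sub_trunc, max_zero_trunc_sub]
  exact ⟨mul_eq_max_zero_of_kkt hd hK_pos hzp (by linarith) hzp_pos hzp_lt,
    mul_eq_max_zero_of_kkt hd hK_pos hzm (by linarith) hzm_pos hzm_lt⟩

/-- Exact values of the auxiliary variables at a KKT point. -/
theorem kkt_aux_values (n : ℕ) (hn : 3 ≤ n) (a : ℕ → ℕ → ℝ) (c : ℕ → ℝ)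
    (K : ℝ) (hK1 : 1 ≤ K)
    (hK : ∀ i, 3 ≤ i → i ≤ n → (∑ j ∈ Finset.Ico 1 i, |a i j|) + |c i| ≤ K)
    (δ : ℝ) (hδ : δ ∈ Set.Ioo (0 : ℝ) 1)
    (y zp zm : ℕ → ℝ) (hkkt : IsKKT n K δ a c y zp zm) :
    ∀ i, 3 ≤ i → i ≤ n →
      K * zp i
          = max 0 (((∑ j ∈ Finset.Ico 1 i, a i j * y j) + c i)
              - trunc ((∑ j ∈ Finset.Ico 1 i, a i j * y j) + c i)) ∧
      K * zm i
          = max 0 (trunc ((∑ j ∈ Finset.Ico 1 i, a i j * y j) + c i)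
              - ((∑ j ∈ Finset.Ico 1 i, a i j * y j) + c i)) :=
  kkt_aux_values_general n a c K hK1 hK δ hδ y zp zm hkkt

end
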